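/- A short g.v.d. with a ground member removed is again a short g.v.d. -/

import Mathlib

/-- Terms: variables, number constants, and list constructors. -/
inductive Tm : Type
  | var : ℕ → Tm
  | const : ℕ → Tm
  | nil : Tm
  | cons : Tm → Tm → Tm
deriving DecidableEq

/-- The set of variables of a term. -/
def Tm.vars : Tm → Finset ℕ
  | .var x => {x}
  | .const _ => ∅
  | .nil => ∅
  | .cons s t => s.vars ∪ t.vars

/-- A term is ground if it has no variables. -/
def Tm.Ground (t : Tm) : Prop := t.vars = ∅

/-- Boolean groundness test. -/
def Tm.groundB : Tm → Bool
  | .var _ => false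
  | .const _ => true
  | .nil => true
  | .cons s t => s.groundB && t.groundB

/-- Applying a substitution to a term. -/
def Tm.subst (σ : ℕ → Tm) : Tm → Tm
  | .var x => σ x
  | .const c => .const c
  | .nil => .nil
  | .cons s t => .cons (s.subst σ) (t.subst σ)

/-- The open list `[t₁,…,tₙ|v]` with members `ts` and open-list variable `v`. -/
def mkOpen (ts : List Tm) (v : ℕ) : Tm := ts.foldr .cons (.var v)

/-- The (closed) list `[t₁,…,tₙ]` with members `ts`. -/
def mkList (ts : List Tm) : Tm := ts.foldr .cons .nil

/-- `(ts, v)` describes a g.v.d. (a linear open list with pairwise distinct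
    members, each member ground or a variable). -/
def IsGVD (ts : List Tm) (v : ℕ) : Prop :=
  (∀ t ∈ ts, t.Ground ∨ ∃ x, t = .var x) ∧
  ts.Nodup ∧
  (ts.map Tm.vars).Pairwise Disjoint ∧
  ∀ t ∈ ts, v ∉ t.vars

/-- `θ` unifies `s` and `t`. -/
def IsUnifier (s t : Tm) (θ : ℕ → Tm) : Prop := s.subst θ = t.subst θ

/-- `θ` is a most general unifier of `s` and `t`. -/
def IsMGU (s t : Tm) (θ : ℕ → Tm) : Prop :=
  IsUnifier s t θ ∧ ∀ σ, IsUnifier s t σ → ∃ δ, ∀ x, σ x = (θ x).subst δ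

/-- `s` is the `k`-th member (1-based) of the term `t`,
    i.e. `t = [t₁,…,t_{k-1},s|t₀]`. -/
inductive KthMem : Tm → ℕ → Tm → Prop
  | head (s t : Tm) : KthMem (.cons s t) 1 s
  | tail {t : Tm} {k : ℕ} {s : Tm} (a : Tm) : KthMem t k s → KthMem (.cons a t) (k + 1) s

/-- A g.v.d. `[t₁,…,tₙ|v]` is short if `n = 0` or `tₙ` is ground. -/
def IsShort (ts : List Tm) : Prop :=
  ts = [] ∨ ∃ t, ts.getLast? = some t ∧ t.Ground

/-- Drop the maximal suffix of non-ground (variable) members. -/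
def trimVars (l : List Tm) : List Tm :=
  (l.reverse.dropWhile (fun t => ! t.groundB)).reverse

/-- `(ts', v')` is obtained from `(ts, v)` by removing a ground member:
    either the last member `tₙ` is ground and is removed together with the
    trailing variables preceding it, or a ground member `tᵢ` with `i < n`
    is replaced by a fresh variable. -/
def Removed (ts : List Tm) (v : ℕ) (ts' : List Tm) (v' : ℕ) : Prop :=
  (ts ≠ [] ∧ (∃ t, ts.getLast? = some t ∧ t.Ground) ∧
    ts' = trimVars ts.dropLast ∧ v' = v) ∨
  (∃ i w, i + 1 < ts.length ∧ (ts.getD i .nil).Ground ∧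
    ts' = ts.set i (.var w) ∧ (∀ t ∈ ts, w ∉ t.vars) ∧ w ≠ v ∧ v' = v)

/-! Removing the last member leaves a sublist, and every sublist of a g.v.d. is a g.v.d.; trimming
the trailing variables then makes it short. Replacing an earlier member by a fresh variable keeps
the members distinct and their variables disjoint because the variable is fresh, and it leaves
the ground last member in place. -/

theorem Tm.ground_of_groundB {t : Tm} (h : t.groundB = true) : t.Ground := by
  induction t with
  | var x => simp [Tm.groundB] at h
  | const c | nil => rfl
  | cons s t ihs iht =>
    rw [Tm.groundB, Bool.and_eq_true] at h
    simp only [Tm.Ground, Tm.vars] at ihs iht ⊢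
    rw [ihs h.1, iht h.2, Finset.empty_union]

theorem List.Pairwise.set {α : Type*} {R : α → α → Prop} [Std.Symm R] {l : List α}
    {a : α} (hl : l.Pairwise R) (ha : ∀ b ∈ l, R a b) (i : ℕ) : (l.set i a).Pairwise R := by
  induction l generalizing i with
  | nil => exact List.Pairwise.nil
  | cons b l ih =>
    rw [List.pairwise_cons] at hl
    rcases i with _ | i
    · exact List.pairwise_cons.2 ⟨fun c hc => ha c (List.mem_cons_of_mem b hc), hl.2⟩
    · refine List.pairwise_cons.2 ⟨fun c hc => ?_, ih hl.2 (fun c hc => ha c (.tail b hc)) i⟩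
      rcases List.mem_or_eq_of_mem_set hc with hc | rfl
      · exact hl.1 c hc
      · exact symm (ha b List.mem_cons_self)

theorem IsGVD.sublist {ts' ts : List Tm} {v : ℕ} (hs : ts'.Sublist ts) (h : IsGVD ts v) :
    IsGVD ts' v := by
  obtain ⟨hform, hnodup, hdisj, hv⟩ := h
  exact ⟨fun t ht => hform t (hs.subset ht), hs.nodup hnodup, hdisj.sublist (hs.map _),
    fun t ht => hv t (hs.subset ht)⟩

theorem IsGVD.set_var {ts : List Tm} {v w : ℕ} (h : IsGVD ts v) (hw : ∀ t ∈ ts, w ∉ t.vars)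
    (hwv : w ≠ v) (i : ℕ) : IsGVD (ts.set i (.var w)) v := by
  obtain ⟨hform, hnodup, hdisj, hv⟩ := h
  refine ⟨fun t ht => ?_, hnodup.set fun hmem => hw _ hmem (Finset.mem_singleton_self w), ?_,
    fun t ht => ?_⟩
  · rcases List.mem_or_eq_of_mem_set ht with ht | rfl
    · exact hform t ht
    · exact Or.inr ⟨w, rfl⟩
  · rw [List.map_set]
    refine hdisj.set (fun s hs => ?_) i
    obtain ⟨t, ht, rfl⟩ := List.mem_map.1 hs
    exact Finset.disjoint_singleton_left.2 (hw t ht)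
  · rcases List.mem_or_eq_of_mem_set ht with ht | rfl
    · exact hv t ht
    · simpa [Tm.vars] using hwv.symm

theorem IsShort.set {ts : List Tm} {i : ℕ} (h : IsShort ts) (hi : i + 1 < ts.length) (t : Tm) :
    IsShort (ts.set i t) := by
  rcases h with rfl | ⟨s, hs, hg⟩
  · simp at hi
  · refine Or.inr ⟨s, ?_, hg⟩
    rw [List.getLast?_eq_getElem?] at hs ⊢
    rwa [List.length_set, List.getElem?_set_ne (by omega)]

theorem trimVars_sublist (l : List Tm) : (trimVars l).Sublist l := by
  simpa [trimVars] using (List.dropWhile_sublist (l := l.reverse) (fun t => !t.groundB)).reverse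

theorem isShort_trimVars (l : List Tm) : IsShort (trimVars l) := by
  have hhead := List.head?_dropWhile_not (fun t => !t.groundB) l.reverse
  unfold IsShort trimVars
  generalize l.reverse.dropWhile (fun t => !t.groundB) = r at hhead ⊢
  rcases r with _ | ⟨t, r⟩
  · exact Or.inl rfl
  · simp only [List.head?_cons, Bool.not_eq_false'] at hhead
    exact Or.inr ⟨t, List.getLast?_reverse, Tm.ground_of_groundB hhead⟩

/-- a short g.v.d. with a ground member removed is again a
    short g.v.d. -/
theorem removed_short_gvd (ts ts' : List Tm) (v v' : ℕ)
    (hgvd : IsGVD ts v) (hshort : IsShort ts)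
    (hrem : Removed ts v ts' v') : IsGVD ts' v' ∧ IsShort ts' := by
  rcases hrem with ⟨-, -, rfl, rfl⟩ | ⟨i, w, hi, -, rfl, hw, hwv, rfl⟩
  · exact ⟨hgvd.sublist ((trimVars_sublist _).trans ts.dropLast_sublist), isShort_trimVars _⟩
  · exact ⟨hgvd.set_var hw hwv i, hshort.set hi _⟩
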